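/- arXiv:2011.14375 — 2 statements merged into one kernel-verified Lean document; each statement's English description precedes it below -/
import Mathlib

section
/- Let $(Y,\mathcal{C},\nu)$ be a probability space, $Y = \bigcup_{i=1}^{m} E_i'$ a partition into measurable sets, and $S : Y \to Y$ an invertible, measure-preserving, ergodic transformation. For each $i$, let $\phi_i$ be the diagonal linear map on $\mathbb{R}^d$ with integer diagonal entries greater than $1$. Define the skew product $R : \mathbb{T}^d \times Y \to \mathbb{T}^d \times Y$ by $R(\pi(t), x) = (\pi(\phi_i(t)), S(x))$ for $x \in E_i'$. Then $R$ is ergodic with respect to $\mu_L \times \nu$. -/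
open MeasureTheory Set


open MeasureTheory Set Filter Pointwise

local notation "𝕊" => AddCircle (1:ℝ)

instance : IsProbabilityMeasure (volume : Measure 𝕊) :=
  ⟨by rw [AddCircle.measure_univ]; norm_num⟩

/-- Zero-one law for subsets of the torus invariant (a.e.) under single-coordinate
translations of arbitrarily large finite order. -/
lemma zero_one : ∀ (d : ℕ) (B : Set (Fin d → 𝕊)), MeasurableSet B →
    (∀ (j : Fin d) (M : ℕ), ∃ u : 𝕊, M ≤ addOrderOf u ∧
      ((fun k => if k = j then u else 0) +ᵥ B : Set _)
        =ᵐ[Measure.pi fun _ : Fin d => volume] B) →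
    (Measure.pi fun _ : Fin d => (volume : Measure 𝕊)) B = 0 ∨
      (Measure.pi fun _ : Fin d => (volume : Measure 𝕊)) B = 1 := by
  intro d
  induction d with
  | zero =>
    intro B hB _
    rcases B.eq_empty_or_nonempty with h | ⟨x, hx⟩
    · left; simp [h]
    · right
      have : B = univ := eq_univ_of_forall fun y => by rwa [Subsingleton.elim y x]
      rw [this]
      exact measure_univ
  | succ d ih =>
    intro B hB hinv
    set μd : Measure (Fin d → 𝕊) := Measure.pi fun _ => volume with hμd
    set μp : Measure (𝕊 × (Fin d → 𝕊)) := (volume : Measure 𝕊).prod μd with hμp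
    set e : (Fin (d+1) → 𝕊) ≃ᵐ 𝕊 × (Fin d → 𝕊) :=
      MeasurableEquiv.piFinSuccAbove (fun _ => 𝕊) 0 with he
    have hmp : MeasurePreserving e (Measure.pi fun _ : Fin (d+1) => volume) μp :=
      measurePreserving_piFinSuccAbove (fun _ : Fin (d+1) => (volume : Measure 𝕊)) 0
    have hmps : MeasurePreserving e.symm μp (Measure.pi fun _ : Fin (d+1) => volume) :=
      MeasurePreserving.symm e hmp
    set C : Set (𝕊 × (Fin d → 𝕊)) := e.symm ⁻¹' B with hC_def
    have hC : MeasurableSet C := e.symm.measurable hB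
    have hBC : (Measure.pi fun _ : Fin (d+1) => (volume : Measure 𝕊)) B = μp C :=
      (hmps.measure_preimage hB.nullMeasurableSet).symm
    -- `e` is additive
    have hadd : ∀ f g : Fin (d+1) → 𝕊, e (f + g) = e f + e g := fun f g => rfl
    have hneg : ∀ f : Fin (d+1) → 𝕊, e (-f) = -(e f) := fun f => rfl
    -- transfer of translations through `e`
    have htrans : ∀ v : Fin (d+1) → 𝕊,
        e.symm ⁻¹' ((v +ᵥ B : Set _)) = ((e v +ᵥ C : Set _)) := by
      intro v
      ext p
      rw [mem_preimage, Set.mem_vadd_set_iff_neg_vadd_mem,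
        Set.mem_vadd_set_iff_neg_vadd_mem, hC_def, mem_preimage]
      have h : e.symm (-(e v) +ᵥ p) = -v +ᵥ e.symm p := by
        apply e.injective
        rw [vadd_eq_add, vadd_eq_add, e.apply_symm_apply, hadd (-v) (e.symm p), hneg,
          e.apply_symm_apply]
      rw [h]
    have hCinv : ∀ v : Fin (d+1) → 𝕊,
        ((v +ᵥ B : Set _) =ᵐ[Measure.pi fun _ : Fin (d+1) => volume] B) →
        ((e v +ᵥ C : Set _) =ᵐ[μp] C) := by
      intro v hv
      have h := hmps.quasiMeasurePreserving.preimage_ae_eq hv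
      rwa [htrans v] at h
    -- images of single-coordinate vectors under `e`
    have he0 : ∀ u : 𝕊, e (fun k => if k = 0 then u else 0) = (u, 0) := by
      intro u
      have : e (fun k => if k = 0 then u else 0)
          = ((fun k : Fin (d+1) => if k = 0 then u else 0) 0,
             fun j : Fin d => (fun k : Fin (d+1) => if k = 0 then u else 0) ((0:Fin (d+1)).succAbove j)) := rfl
      rw [this]
      simp [Fin.succAbove_zero, Fin.succ_ne_zero]
      rfl
    have hesucc : ∀ (j : Fin d) (u : 𝕊),
        e (fun k => if k = j.succ then u else 0) = (0, fun k => if k = j then u else 0) := by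
      intro j u
      have : e (fun k => if k = j.succ then u else 0)
          = ((fun k : Fin (d+1) => if k = j.succ then u else 0) 0,
             fun i : Fin d => (fun k : Fin (d+1) => if k = j.succ then u else 0) ((0:Fin (d+1)).succAbove i)) := rfl
      rw [this]
      simp only [Fin.succAbove_zero]
      refine Prod.ext ?_ ?_
      · simp [(Fin.succ_ne_zero j).symm]
      · funext k
        simp [Fin.succ_inj]
    -- sections over the second coordinate
    set Cs : (Fin d → 𝕊) → Set 𝕊 := fun z => (fun x => (x, z)) ⁻¹' C with hCs_def
    have hCs_meas : ∀ z, MeasurableSet (Cs z) := fun z => measurable_prodMk_right hC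
    have hg_meas : Measurable fun z => volume (Cs z) := measurable_measure_prodMk_right hC
    -- null sets have a.e. null sections (over the second coordinate)
    have hsec_null : ∀ (s : Set (𝕊 × (Fin d → 𝕊))), MeasurableSet s → μp s = 0 →
        ∀ᵐ z ∂μd, volume ((fun x => (x, z)) ⁻¹' s) = 0 := by
      intro s hs h0
      have hswap : (μd.prod (volume : Measure 𝕊)) (Prod.swap ⁻¹' s) = 0 := by
        rw [← Measure.map_apply measurable_swap hs, Measure.prod_swap]
        exact h0
      have h := Measure.measure_ae_null_of_prod_null hswap
      rw [Filter.EventuallyEq] at h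
      filter_upwards [h] with z hz
      simpa [preimage_preimage] using hz
    -- a.e.-equal sets have a.e. a.e.-equal sections
    have hsec_ae : ∀ s t : Set (𝕊 × (Fin d → 𝕊)), MeasurableSet s → MeasurableSet t →
        (s =ᵐ[μp] t) →
        ∀ᵐ z ∂μd, ((fun x => (x, z)) ⁻¹' s) =ᵐ[volume] ((fun x => (x, z)) ⁻¹' t) := by
      intro s t hs ht hst
      obtain ⟨h1, h2⟩ := ae_eq_set.mp hst
      filter_upwards [hsec_null _ (hs.diff ht) h1, hsec_null _ (ht.diff hs) h2] with z hz1 hz2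
      refine ae_eq_set.mpr ⟨?_, ?_⟩
      · simpa [preimage_diff] using hz1
      · simpa [preimage_diff] using hz2
    -- translated copies of C are measurable
    have hvadd_meas : ∀ w : 𝕊 × (Fin d → 𝕊), MeasurableSet ((w +ᵥ C : Set _)) := by
      intro w
      have h : (w +ᵥ C : Set _) = (fun p => -w + p) ⁻¹' C := by
        ext p
        rw [Set.mem_vadd_set_iff_neg_vadd_mem, vadd_eq_add, mem_preimage]
        exact Iff.rfl
      rw [h]
      exact (measurable_const_add _) hC
    -- sections of a translate in the first coordinate
    have hsecv : ∀ (w : 𝕊) (z : Fin d → 𝕊),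
        (fun x => (x, z)) ⁻¹' (((w, (0 : Fin d → 𝕊)) +ᵥ C : Set _)) = (w +ᵥ Cs z : Set _) := by
      intro w z
      ext x
      rw [mem_preimage, Set.mem_vadd_set_iff_neg_vadd_mem, Set.mem_vadd_set_iff_neg_vadd_mem,
        vadd_eq_add, vadd_eq_add]
      have : -(w, (0 : Fin d → 𝕊)) + (x, z) = (-w + x, z) := by
        simp [Prod.ext_iff]
      rw [this]
      exact Iff.rfl
    -- sections of a translate in the second coordinate
    have hsecv2 : ∀ (v : Fin d → 𝕊) (z : Fin d → 𝕊),
        (fun x => (x, z)) ⁻¹' ((((0:𝕊), v) +ᵥ C : Set _)) = Cs (-v + z) := by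
      intro v z
      ext x
      rw [mem_preimage, Set.mem_vadd_set_iff_neg_vadd_mem, vadd_eq_add]
      have : -((0:𝕊), v) + (x, z) = (x, -v + z) := by
        simp [Prod.ext_iff]
      rw [this]
      exact Iff.rfl
    -- choose the invariance sequence for coordinate 0
    choose u hu huB using hinv 0
    have hCu : ∀ M, (((u M, (0 : Fin d → 𝕊)) +ᵥ C : Set _) =ᵐ[μp] C) := by
      intro M
      have h := hCinv _ (huB M)
      rwa [he0 (u M)] at h
    -- a.e. section is invariant under all the u M
    have hae_inv : ∀ᵐ z ∂μd, ∀ M, ((u M +ᵥ Cs z : Set _) =ᵐ[volume] Cs z) := by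
      rw [ae_all_iff]
      intro M
      filter_upwards [hsec_ae _ _ (hvadd_meas _) hC (hCu M)] with z hz
      rwa [hsecv (u M) z] at hz
    -- hence a.e. section has measure 0 or 1
    have hae01 : ∀ᵐ z ∂μd, volume (Cs z) = 0 ∨ volume (Cs z) = 1 := by
      filter_upwards [hae_inv] with z hz
      have hord : Tendsto (addOrderOf ∘ u) atTop atTop :=
        tendsto_atTop_mono hu tendsto_id
      rcases AddCircle.ae_empty_or_univ_of_forall_vadd_ae_eq_self
          (hCs_meas z).nullMeasurableSet hz hord with h | h
      · left; rw [measure_congr h]; simp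
      · right; rw [measure_congr h]; exact measure_univ
    set A : Set (Fin d → 𝕊) := {z | volume (Cs z) = 1} with hA_def
    have hA : MeasurableSet A := hg_meas (measurableSet_singleton 1)
    have hCA : μp C = μd A := by
      rw [hμp, Measure.prod_apply_symm hC]
      have : ∫⁻ z, volume ((fun x => (x, z)) ⁻¹' C) ∂μd
          = ∫⁻ z, A.indicator (fun _ => 1) z ∂μd := by
        refine lintegral_congr_ae ?_
        filter_upwards [hae01] with z hz
        rcases hz with h0 | h1
        · have hzA : z ∉ A := fun hmem => zero_ne_one (h0.symm.trans hmem)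
          rw [indicator_of_notMem hzA]
          exact h0
        · have hzA : z ∈ A := h1
          rw [indicator_of_mem hzA]
          exact h1
      rw [this, lintegral_indicator hA]
      simp
    -- A inherits the invariance properties
    have hAinv : ∀ (j : Fin d) (M : ℕ), ∃ w : 𝕊, M ≤ addOrderOf w ∧
        ((fun k => if k = j then w else 0) +ᵥ A : Set _) =ᵐ[μd] A := by
      intro j M
      obtain ⟨w, hw, hwB⟩ := hinv j.succ M
      refine ⟨w, hw, ?_⟩
      set v : Fin d → 𝕊 := fun k => if k = j then w else 0 with hv_def
      have hCw : ((((0:𝕊), v) +ᵥ C : Set _) =ᵐ[μp] C) := by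
        have h := hCinv _ hwB
        rwa [hesucc j w] at h
      have hae2 : ∀ᵐ z ∂μd, volume (Cs (-v + z)) = volume (Cs z) := by
        filter_upwards [hsec_ae _ _ (hvadd_meas _) hC hCw] with z hz
        rw [hsecv2 v z] at hz
        exact measure_congr hz
      have hN : μd {z | ¬ (volume (Cs (-v + z)) = volume (Cs z))} = 0 := ae_iff.mp hae2
      have hvA : (v +ᵥ A : Set _) = {z | volume (Cs (-v + z)) = 1} := by
        ext z
        rw [Set.mem_vadd_set_iff_neg_vadd_mem, vadd_eq_add]
        rfl
      refine ae_eq_set.mpr ⟨?_, ?_⟩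
      · refine measure_mono_null ?_ hN
        intro z hz
        obtain ⟨hz1, hz2⟩ := hz
        rw [hvA] at hz1
        intro hcon
        rw [mem_setOf_eq] at hz1
        exact hz2 (by rw [hA_def, mem_setOf_eq, ← hcon]; exact hz1)
      · refine measure_mono_null ?_ hN
        intro z hz
        obtain ⟨hz1, hz2⟩ := hz
        rw [hvA] at hz2
        intro hcon
        rw [hA_def, mem_setOf_eq] at hz1
        rw [mem_setOf_eq] at hz2
        exact hz2 (by rw [hcon]; exact hz1)
    rcases ih A hA hAinv with h | h
    · left; rw [hBC, hCA]; exact h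
    · right; rw [hBC, hCA]; exact h

/-- The skew product `R(π(t), x) = (π(φ_i t), S x)` for `x ∈ E'_i`, where `φ_i` is a
diagonal integer matrix with entries `> 1`, is ergodic with respect to the product measure
`μ_L × ν` on `𝕋^d × Y`. -/
theorem stmt4 (d m : ℕ) {Y : Type} [MeasurableSpace Y]
    (ν : Measure Y) [IsProbabilityMeasure ν]
    (S : Y → Y) (hS : Ergodic S ν) (hSbij : Function.Bijective S)
    (E' : Fin m → Set Y) (hE'meas : ∀ i, MeasurableSet (E' i))
    (hE'disj : ∀ i j, i ≠ j → Disjoint (E' i) (E' j))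
    (hE'cover : (⋃ i, E' i) = Set.univ)
    (n : Fin m → Fin d → ℕ) (hn : ∀ i j, 1 < n i j)
    (R : (Fin d → AddCircle (1:ℝ)) × Y → (Fin d → AddCircle (1:ℝ)) × Y)
    (hR : ∀ (z : Fin d → AddCircle (1:ℝ)) (y : Y) (i : Fin m), y ∈ E' i →
      R (z, y) = (fun j => (n i j) • z j, S y)) :
    Ergodic R
      ((Measure.pi fun _ : Fin d => (volume : Measure (AddCircle (1:ℝ)))).prod ν) := by
  
  classical
  set μX : Measure (Fin d → 𝕊) := Measure.pi fun _ => volume with hμX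
  have hSmeas : Measurable S := hS.toMeasurePreserving.measurable
  have hidx : ∀ y, ∃ i, y ∈ E' i := by
    intro y
    have h : y ∈ ⋃ i, E' i := by rw [hE'cover]; exact mem_univ y
    simpa using h
  set i0 : Y → Fin m := fun y => (hidx y).choose with hi0_def
  have hi0 : ∀ y, y ∈ E' (i0 y) := fun y => (hidx y).choose_spec
  set φ : Fin m → (Fin d → 𝕊) → (Fin d → 𝕊) := fun i z j => n i j • z j with hφ
  have hφmp : ∀ i, MeasurePreserving (φ i) μX μX := fun i =>
    measurePreserving_pi _ _ (fun j => (AddCircle.ergodic_nsmul (hn i j)).toMeasurePreserving)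
  -- sections of R-preimages
  have hsecR : ∀ (t : Set ((Fin d → 𝕊) × Y)) (y : Y),
      (fun z => (z, y)) ⁻¹' (R ⁻¹' t) = φ (i0 y) ⁻¹' ((fun z => (z, S y)) ⁻¹' t) := by
    intro t y
    ext z
    simp only [mem_preimage]
    rw [hR z y (i0 y) (hi0 y)]
  -- measurability of R
  have hRmeas : Measurable R := by
    intro t ht
    have hform : R ⁻¹' t = ⋃ i, ((univ ×ˢ E' i) ∩
        ((fun p : (Fin d → 𝕊) × Y => (φ i p.1, S p.2)) ⁻¹' t)) := by
      ext ⟨z, y⟩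
      simp only [mem_iUnion, mem_inter_iff, mem_prod, mem_univ, true_and, mem_preimage]
      constructor
      · intro hp
        exact ⟨i0 y, hi0 y, by rwa [← hR z y (i0 y) (hi0 y)]⟩
      · rintro ⟨i, hi, hFi⟩
        rwa [hR z y i hi]
    rw [hform]
    refine MeasurableSet.iUnion fun i => (MeasurableSet.univ.prod (hE'meas i)).inter ?_
    exact (((hφmp i).measurable.comp measurable_fst).prodMk (hSmeas.comp measurable_snd)) ht
  -- measure preservation of R
  have hRmp : MeasurePreserving R (μX.prod ν) (μX.prod ν) := by
    refine ⟨hRmeas, Measure.ext fun t ht => ?_⟩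
    rw [Measure.map_apply hRmeas ht, Measure.prod_apply_symm (hRmeas ht),
      Measure.prod_apply_symm ht]
    have h1 : ∀ y, μX ((fun z => (z, y)) ⁻¹' (R ⁻¹' t)) = μX ((fun z => (z, S y)) ⁻¹' t) := by
      intro y
      rw [hsecR t y]
      exact (hφmp (i0 y)).measure_preimage (measurable_prodMk_right ht).nullMeasurableSet
    simp_rw [h1]
    exact hS.toMeasurePreserving.lintegral_comp (measurable_measure_prodMk_right ht)
  refine ⟨hRmp, ⟨fun s hs hsinv => ?_⟩⟩
  rw [eventuallyConst_set']
  -- one-step relation between sections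
  have hkey : ∀ y, (fun z => (z, y)) ⁻¹' s = φ (i0 y) ⁻¹' ((fun z => (z, S y)) ⁻¹' s) := by
    intro y
    conv_lhs => rw [← hsinv]
    exact hsecR s y
  -- iterated multipliers
  set K : ℕ → Y → Fin d → ℕ :=
    fun N => N.rec (fun _ _ => 1) (fun _ ih y j => n (i0 y) j * ih (S y) j) with hK_def
  have hK0 : ∀ y j, K 0 y j = 1 := fun _ _ => rfl
  have hKsucc : ∀ N y j, K (N+1) y j = n (i0 y) j * K N (S y) j := fun _ _ _ => rfl
  have hK2 : ∀ N y j, 2^N ≤ K N y j := by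
    intro N
    induction N with
    | zero => intro y j; simp [hK0]
    | succ N ihN =>
      intro y j
      rw [hKsucc]
      calc 2^(N+1) = 2 * 2^N := by ring
      _ ≤ n (i0 y) j * K N (S y) j := Nat.mul_le_mul (hn _ j) (ihN (S y) j)
  -- iterated relation between sections
  have hkeyN : ∀ N y, (fun z => (z, y)) ⁻¹' s
      = (fun (z : Fin d → 𝕊) (j : Fin d) => K N y j • z j) ⁻¹' ((fun z => (z, S^[N] y)) ⁻¹' s) := by
    intro N
    induction N with
    | zero =>
      intro y
      have h1 : (fun (z : Fin d → 𝕊) (j : Fin d) => K 0 y j • z j) = id := by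
        funext z j
        simp [hK0]
      rw [h1]
      simp
    | succ N ihN =>
      intro y
      rw [hkey y, ihN (S y), ← preimage_comp]
      have hcomp : ((fun (z : Fin d → 𝕊) (j : Fin d) => K N (S y) j • z j) ∘ (φ (i0 y)))
          = fun (z : Fin d → 𝕊) (j : Fin d) => K (N+1) y j • z j := by
        funext z j
        simp only [Function.comp_apply, hφ, smul_smul, hKsucc]
        rw [mul_comm]
      rw [hcomp, ← Function.iterate_succ_apply]
  -- every section has measure 0 or 1
  have h01 : ∀ y, μX ((fun z => (z, y)) ⁻¹' s) = 0 ∨ μX ((fun z => (z, y)) ⁻¹' s) = 1 := by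
    intro y
    apply zero_one d _ (measurable_prodMk_right hs)
    intro j M
    have hKpos : 0 < K M y j := lt_of_lt_of_le (Nat.two_pow_pos M) (hK2 M y j)
    have hKM : M ≤ K M y j := le_trans (Nat.lt_two_pow_self (n := M)).le (hK2 M y j)
    set u : 𝕊 := ((1 / (K M y j : ℝ) : ℝ) : 𝕊) with hu_def
    refine ⟨u, ?_, ?_⟩
    · rw [hu_def, AddCircle.addOrderOf_period_div hKpos]
      exact hKM
    · set v : Fin d → 𝕊 := fun k => if k = j then u else 0 with hv_def
      have hzero : K M y j • u = 0 := by
        rw [hu_def, ← AddCircle.coe_nsmul, nsmul_eq_mul, mul_one_div,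
          div_self (by exact_mod_cast hKpos.ne' : (K M y j : ℝ) ≠ 0)]
        exact AddCircle.coe_period 1
      have hv0 : ∀ k, K M y k • v k = 0 := by
        intro k
        by_cases hk : k = j
        · subst hk; simpa [hv_def] using hzero
        · simp [hv_def, hk]
      have hψ : ((fun (z : Fin d → 𝕊) (k : Fin d) => K M y k • z k) ∘ (fun z => -v + z))
          = fun (z : Fin d → 𝕊) (k : Fin d) => K M y k • z k := by
        funext z k
        simp only [Function.comp_apply, Pi.add_apply, Pi.neg_apply]
        rw [smul_add, smul_neg, hv0 k, neg_zero, zero_add]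
      have hvadd_pre : ∀ (T : Set (Fin d → 𝕊)), (v +ᵥ T : Set _) = (fun z => -v + z) ⁻¹' T := by
        intro T
        ext z
        rw [Set.mem_vadd_set_iff_neg_vadd_mem, vadd_eq_add, mem_preimage]
      have heq : (v +ᵥ ((fun z => (z, y)) ⁻¹' s) : Set _) = (fun z => (z, y)) ⁻¹' s := by
        rw [hkeyN M y, hvadd_pre, ← preimage_comp, hψ]
      rw [heq]
      exact Filter.EventuallyEq.rfl
  -- invariance of the section measure under S
  have hgS : ∀ y, μX ((fun z => (z, S y)) ⁻¹' s) = μX ((fun z => (z, y)) ⁻¹' s) := by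
    intro y
    conv_rhs => rw [hkey y]
    exact ((hφmp (i0 y)).measure_preimage
      (measurable_prodMk_right hs).nullMeasurableSet).symm
  set A : Set Y := {y | μX ((fun z => (z, y)) ⁻¹' s) = 1} with hA_def
  have hA : MeasurableSet A := (measurable_measure_prodMk_right hs) (measurableSet_singleton 1)
  have hAinv : S ⁻¹' A = A := by
    ext y
    simp only [mem_preimage, hA_def, mem_setOf_eq]
    rw [hgS y]
  have htot : (μX.prod ν) s = ν A := by
    rw [Measure.prod_apply_symm hs]
    have hind : ∀ y, μX ((fun z => (z, y)) ⁻¹' s) = A.indicator (fun _ => 1) y := by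
      intro y
      rcases h01 y with h0 | h1
      · have hyA : y ∉ A := by
          rw [hA_def, mem_setOf_eq, h0]
          simp
        rw [indicator_of_notMem hyA]
        exact h0
      · have hyA : y ∈ A := by
          rw [hA_def, mem_setOf_eq]
          exact h1
        rw [indicator_of_mem hyA]
        exact h1
    rw [lintegral_congr hind, lintegral_indicator hA]
    simp
  rcases hS.toPreErgodic.ae_empty_or_univ hA hAinv with hA0 | hA1
  · left
    rw [ae_eq_empty, htot]
    exact ae_eq_empty.mp hA0
  · right
    rw [ae_eq_univ_iff_measure_eq hs.nullMeasurableSet, htot, measure_congr hA1]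
    simp [measure_univ]
end

section
/- Let $\rho$ be a binary block substitution in $\mathbb{R}^d$ with alphabet $\{T_1, T_2\}$ (both supported on $[0,1]^d$) and expansion map $\phi$ given by a diagonal integer matrix. Let $F = \phi([0,1)^d) \cap \mathbb{Z}^d$ and, for $k,l \in \{1,2\}$, let $S_{k,l} = T_{k,1} \cap T_{l,2}$ where $T_{i,j} \subset \mathbb{Z}^d$ are the digit sets. Define polynomials $q_{k,l}(z) = \sum_{f \in S_{k,l}} z^f$ on $\mathbb{T}^d$, and the Fourier matrix on the torus $C(z) = \begin{pmatrix} q_{1,1}(z)+q_{1,2}(z) & q_{1,1}(z)+q_{2,1}(z) \\ q_{2,1}(z)+q_{2,2}(z) & q_{1,2}(z)+q_{2,2}(z) \end{pmatrix}$. Then for every $z \in \mathbb{T}^d$, $\det C(z) = (q_{1,2}(z) - q_{2,1}(z)) \sum_{f \in F} z^f$. -/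
open Matrix

/-- For a binary block substitution with digit sets `T k j` partitioning
`F = φ([0,1)^d) ∩ ℤ^d`, sets `S_{k,l} = T_{k,1} ∩ T_{l,2}`, polynomials
`q_{k,l}(z) = ∑_{f ∈ S_{k,l}} z^f`, and torus Fourier matrix `C(z)`, one has
`det C(z) = (q_{1,2}(z) - q_{2,1}(z)) ∑_{f ∈ F} z^f` for every `z ∈ 𝕋^d`. -/
theorem stmt5 (d : ℕ) (F : Finset (Fin d → ℤ))
    (T : Fin 2 → Fin 2 → Finset (Fin d → ℤ))
    (hpart : ∀ j, T 0 j ∪ T 1 j = F)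
    (hdisj : ∀ j, Disjoint (T 0 j) (T 1 j))
    (z : Fin d → ℂ) (hz : ∀ j, ‖z j‖ = 1)
    (q : Fin 2 → Fin 2 → ℂ)
    (hq : ∀ k l, q k l = ∑ f ∈ T k 0 ∩ T l 1, ∏ j, z j ^ (f j))
    (C : Matrix (Fin 2) (Fin 2) ℂ)
    (hC : C = !![q 0 0 + q 0 1, q 0 0 + q 1 0;
                 q 1 0 + q 1 1, q 0 1 + q 1 1]) :
    C.det = (q 0 1 - q 1 0) * ∑ f ∈ F, ∏ j, z j ^ (f j) := by
  have hsplit : ∀ k : Fin 2, (∑ f ∈ T k 0, ∏ j, z j ^ (f j)) =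
      (∑ f ∈ T k 0 ∩ T 0 1, ∏ j, z j ^ (f j)) +
      (∑ f ∈ T k 0 ∩ T 1 1, ∏ j, z j ^ (f j)) := by
    intro k
    have hsub : T k 0 ⊆ T 0 1 ∪ T 1 1 := by
      rw [hpart 1, ← hpart 0]
      fin_cases k
      · exact Finset.subset_union_left
      · exact Finset.subset_union_right
    have : T k 0 = (T k 0 ∩ T 0 1) ∪ (T k 0 ∩ T 1 1) := by
      rw [← Finset.inter_union_distrib_left, Finset.inter_eq_left.mpr hsub]
    conv_lhs => rw [this]
    rw [Finset.sum_union
      ((hdisj 1).mono Finset.inter_subset_right Finset.inter_subset_right)]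
  have hF : (∑ f ∈ F, ∏ j, z j ^ (f j)) = q 0 0 + q 0 1 + q 1 0 + q 1 1 := by
    rw [← hpart 0, Finset.sum_union (hdisj 0), hsplit 0, hsplit 1,
      hq 0 0, hq 0 1, hq 1 0, hq 1 1]
    ring
  rw [hC, hF]
  simp [Matrix.det_fin_two]
  ring
end
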